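/- arXiv:0705.0705 — 3 statements merged into one kernel-verified Lean document; each statement's English description precedes it below -/
import Mathlib

section
/- For the sliced propagator C_i(x,y) = ∫_{M^{-2i}}^{M^{-2(i-1)}} e^{-m²α − |x−y|²/(4α)} α^{-d/2} dα with M > 1, d > 2, and i ≥ 1, there is a constant K (depending on M, d) such that |C_i(x,y)| ≤ K·M^{(d−2)i}·e^{−M^i|x−y|}. -/
open MeasureTheory Real

/-!
On the slice `α ∈ (M^{-2i}, M^{-2(i-1)}]` the factor `α^{-d/2}` is at most `M^{di}`, while
`|x-y|²/(4α) ≥ (M^{i-1}|x-y|)²/4 ≥ M^i|x-y| - M²` by AM-GM, so the integrand is at most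
`e^{M²} M^{di} e^{-M^i|x-y|}`. Multiplying by the length `≤ M^{-2(i-1)}` of the slice gives the
bound with `K = M² e^{M²}`.
-/

lemma heat_exponent_le {m r α u c : ℝ} (hα : 0 < α) (hαu : α * u ^ 2 ≤ 1) :
    -(m ^ 2 * α) - r ^ 2 / (4 * α) ≤ c ^ 2 - c * u * r := by
  have hgauss : u ^ 2 * r ^ 2 / 4 ≤ r ^ 2 / (4 * α) := by
    rw [div_le_div_iff₀ (by norm_num) (by positivity)]
    nlinarith [sq_nonneg r]
  have hamgm : c * u * r ≤ u ^ 2 * r ^ 2 / 4 + c ^ 2 := by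
    nlinarith [two_mul_le_add_sq c (u * r / 2)]
  nlinarith [sq_nonneg m]

lemma heat_integrand_le {d : ℕ} {m r a α u c : ℝ} (ha : 0 < a) (haα : a ≤ α)
    (hαu : α * u ^ 2 ≤ 1) :
    exp (-(m ^ 2 * α) - r ^ 2 / (4 * α)) * α ^ (-(d : ℝ) / 2)
      ≤ exp (c ^ 2 - c * u * r) * a ^ (-(d : ℝ) / 2) := by
  have hα : 0 < α := ha.trans_le haα
  have hd : -(d : ℝ) / 2 ≤ 0 := by have := d.cast_nonneg (α := ℝ); linarith
  exact mul_le_mul (exp_le_exp.mpr (heat_exponent_le hα hαu))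
    (rpow_le_rpow_of_nonpos ha haα hd) (by positivity) (by positivity)

lemma abs_integral_Ioc_heat_le (d : ℕ) (m r c : ℝ) {a b u : ℝ} (ha : 0 < a) (hab : a ≤ b)
    (hbu : b * u ^ 2 ≤ 1) :
    |∫ α in Set.Ioc a b, exp (-(m ^ 2 * α) - r ^ 2 / (4 * α)) * α ^ (-(d : ℝ) / 2)|
      ≤ exp (c ^ 2 - c * u * r) * a ^ (-(d : ℝ) / 2) * b := by
  rw [← intervalIntegral.integral_of_le hab, ← Real.norm_eq_abs]
  calc _ ≤ exp (c ^ 2 - c * u * r) * a ^ (-(d : ℝ) / 2) * |b - a| := by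
        refine intervalIntegral.norm_integral_le_of_norm_le_const fun α hα => ?_
        rw [Set.uIoc_of_le hab] at hα
        have hαu : α * u ^ 2 ≤ 1 := le_trans (by gcongr; exact hα.2) hbu
        rw [Real.norm_of_nonneg (by have := ha.trans hα.1; positivity)]
        exact heat_integrand_le ha hα.1.le hαu
    _ ≤ _ := by
        rw [abs_of_nonneg (sub_nonneg.mpr hab)]
        gcongr
        linarith

theorem sliced_propagator_bound_general (d : ℕ) (M : ℝ) (hM : 1 < M) :
    ∃ K > (0 : ℝ), ∀ m : ℝ, 0 ≤ m → ∀ i : ℕ, 1 ≤ i →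
      ∀ x y : EuclideanSpace ℝ (Fin d),
        |∫ α in Set.Ioc (M ^ (-2 * (i : ℝ))) (M ^ (-2 * ((i : ℝ) - 1))),
            Real.exp (-(m ^ 2 * α) - ‖x - y‖ ^ 2 / (4 * α)) * α ^ (-(d : ℝ) / 2)|
          ≤ K * M ^ (((d : ℝ) - 2) * (i : ℝ)) * Real.exp (-(M ^ (i : ℝ)) * ‖x - y‖) := by
  have hM0 : 0 < M := by linarith
  refine ⟨M ^ (2 : ℝ) * exp (M ^ 2), by positivity, fun m _ i _ x y => ?_⟩
  have hab : M ^ (-2 * (i : ℝ)) ≤ M ^ (-2 * ((i : ℝ) - 1)) :=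
    rpow_le_rpow_of_exponent_le hM.le (by linarith)
  have hbu : M ^ (-2 * ((i : ℝ) - 1)) * (M ^ ((i : ℝ) - 1)) ^ 2 = 1 := by
    rw [← rpow_natCast, ← rpow_mul hM0.le, ← rpow_add hM0]
    convert rpow_zero M using 2
    push_cast
    ring
  have hMu : M * M ^ ((i : ℝ) - 1) = M ^ (i : ℝ) := by
    nth_rewrite 1 [← rpow_one M]
    rw [← rpow_add hM0]
    ring_nf
  have hpow : (M ^ (-2 * (i : ℝ))) ^ (-(d : ℝ) / 2) * M ^ (-2 * ((i : ℝ) - 1))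
      = M ^ (2 : ℝ) * M ^ (((d : ℝ) - 2) * (i : ℝ)) := by
    rw [← rpow_mul hM0.le, ← rpow_add hM0, ← rpow_add hM0]
    ring_nf
  refine (abs_integral_Ioc_heat_le d m ‖x - y‖ M (rpow_pos_of_pos hM0 _) hab hbu.le).trans
    (le_of_eq ?_)
  rw [sub_eq_add_neg, exp_add, ← neg_mul, hMu, mul_assoc, mul_assoc, hpow]
  ring

/-- Sliced propagator bound: for `M > 1`, `d > 2`, there is a constant `K` (depending
only on `M` and `d`) such that for every mass `m ≥ 0`, slice index `i ≥ 1` and points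
`x, y ∈ ℝ^d`, the sliced propagator
`C_i(x,y) = ∫_{M^{-2i}}^{M^{-2(i-1)}} e^{-m²α - |x-y|²/(4α)} α^{-d/2} dα`
satisfies `|C_i(x,y)| ≤ K · M^{(d-2)i} · e^{-M^i |x-y|}`. -/
theorem sliced_propagator_bound (d : ℕ) (hd : 2 < d) (M : ℝ) (hM : 1 < M) :
    ∃ K > (0 : ℝ), ∀ m : ℝ, 0 ≤ m → ∀ i : ℕ, 1 ≤ i →
      ∀ x y : EuclideanSpace ℝ (Fin d),
        |∫ α in Set.Ioc (M ^ (-2 * (i : ℝ))) (M ^ (-2 * ((i : ℝ) - 1))),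
            Real.exp (-(m ^ 2 * α) - ‖x - y‖ ^ 2 / (4 * α)) * α ^ (-(d : ℝ) / 2)|
          ≤ K * M ^ (((d : ℝ) - 2) * (i : ℝ)) * Real.exp (-(M ^ (i : ℝ)) * ‖x - y‖) :=
  sliced_propagator_bound_general d M hM
end

section
/- For any n×n matrix A over a commutative ring, the Berezin (Grassmann) integral identity det A = ∫ dψ̄ dψ e^{−ψ̄Aψ} holds, where ψ̄₁,…,ψ̄ₙ, ψ₁,…,ψₙ are 2n anticommuting generators, e^{−ψ̄Aψ} = ∏-expansion of exp(−∑_{i,j} ψ̄_i A_{ij} ψ_j), and the Grassmann integral extracts the coefficient of ψ̄₁ψ₁⋯ψ̄ₙψₙ (with the appropriate sign convention). -/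
open Finset

/-- The Grassmann (exterior) algebra on `2n` anticommuting generators
`ψ₁, ψ̄₁, …, ψₙ, ψ̄ₙ`, modeled by coefficient functions indexed by subsets of the
generators.  Generator `2i` is `ψᵢ` and generator `2i+1` is `ψ̄ᵢ`, so that the top
monomial (in increasing generator order) is `ψ₁ψ̄₁ψ₂ψ̄₂⋯ψₙψ̄ₙ`, matching the Berezin
convention `∫ dψ̄ dψ ψᵢψ̄ᵢ = 1`, i.e. the sign convention for which
`∫ dψ̄ dψ e^{−ψ̄Aψ} = det A`. -/
abbrev Grassmann (n : ℕ) (R : Type*) := Finset (Fin (2 * n)) → R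

/-- Koszul sign produced when multiplying the monomials indexed by `T` and `U`. -/
def gsign {n : ℕ} (T U : Finset (Fin (2 * n))) : ℤ :=
  (-1) ^ ((T ×ˢ U).filter fun q => q.2 < q.1).card

/-- Product in the Grassmann algebra. -/
def gmul {n : ℕ} {R : Type*} [CommRing R] (f g : Grassmann n R) : Grassmann n R :=
  fun S => ∑ T ∈ S.powerset, ((gsign T (S \ T) : ℤ) : R) * f T * g (S \ T)

/-- Unit of the Grassmann algebra. -/
def gone {n : ℕ} {R : Type*} [CommRing R] : Grassmann n R :=
  fun S => if S = ∅ then 1 else 0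

/-- Powers in the Grassmann algebra. -/
def gpow {n : ℕ} {R : Type*} [CommRing R] (f : Grassmann n R) : ℕ → Grassmann n R
  | 0 => gone
  | k + 1 => gmul f (gpow f k)

/-- Exponential in the Grassmann algebra (a finite sum, since every element with no
constant term is nilpotent: monomials of degree `> 2n` vanish). -/
noncomputable def gexp {n : ℕ} {R : Type*} [CommRing R] [Algebra ℚ R]
    (f : Grassmann n R) : Grassmann n R :=
  fun S => ∑ k ∈ Finset.range (2 * n + 1),
    algebraMap ℚ R ((Nat.factorial k : ℚ))⁻¹ * gpow f k S

/-- The generator `ψᵢ`. -/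
def psi {n : ℕ} {R : Type*} [CommRing R] (i : Fin n) : Grassmann n R :=
  fun S => if S = {(⟨2 * i.1, by have := i.2; omega⟩ : Fin (2 * n))} then 1 else 0

/-- The generator `ψ̄ᵢ`. -/
def psibar {n : ℕ} {R : Type*} [CommRing R] (i : Fin n) : Grassmann n R :=
  fun S => if S = {(⟨2 * i.1 + 1, by have := i.2; omega⟩ : Fin (2 * n))} then 1 else 0

/-- The quadratic element `ψ̄Aψ = ∑_{i,j} A_{ij} ψ̄ᵢψⱼ`. -/
def quadForm {n : ℕ} {R : Type*} [CommRing R] (A : Matrix (Fin n) (Fin n) R) :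
    Grassmann n R :=
  fun S => ∑ i, ∑ j, A i j * gmul (psibar i) (psi j) S

/-- Berezin integration `∫ dψ̄ dψ`: extraction of the coefficient of the top monomial. -/
def berezin {n : ℕ} {R : Type*} [CommRing R] (f : Grassmann n R) : R :=
  f Finset.univ

/-!
Write `-ψ̄Aψ = ∑ᵢ ρᵢ(Aᵢ)` with `ρᵢ(v) = -ψ̄ᵢ ψ(v)` and `ψ(v) = ∑ⱼ vⱼ ψⱼ`, where `Aᵢ` is the
`i`-th row of `A`. Homogeneous elements of degrees `d, e` satisfy `fg = (-1)^(de) gf`, and odd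
ones square to zero. So the `ρᵢ(v)`, of degree 2, commute with each other, and
`ρᵢ(v) ρₖ(v) = -ψ̄ᵢψ̄ₖ ψ(v)² = 0`. Hence `(∑ ρᵢ(Aᵢ))^n = n! ρ₀(A₀) ⋯ ρₙ₋₁(Aₙ₋₁)` is the only
term of the exponential of degree `2n`, and the top coefficient of `ρ₀(v₀) ⋯ ρₙ₋₁(vₙ₋₁)` is an
alternating multilinear form in the rows. On the standard basis `ρᵢ(eᵢ) = ψᵢψ̄ᵢ`, whose ordered
product is the top monomial, so this form is the determinant.
-/

lemma Finset.sum_powerset_powerset_sdiff {α M : Type*} [DecidableEq α] [AddCommMonoid M]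
    (S : Finset α) (F : Finset α → Finset α → M) :
    ∑ T ∈ S.powerset, ∑ T' ∈ T.powerset, F T' (T \ T')
      = ∑ T ∈ S.powerset, ∑ U ∈ (S \ T).powerset, F T U := by
  rw [sum_sigma', sum_sigma']
  refine sum_nbij' (fun p => ⟨p.2, p.1 \ p.2⟩) (fun p => ⟨p.1 ∪ p.2, p.1⟩) ?_ ?_ ?_ ?_
    (fun _ _ => rfl)
  · rintro ⟨T, T'⟩ hp
    simp only [mem_sigma, mem_powerset] at hp ⊢
    exact ⟨hp.2.trans hp.1, sdiff_subset_sdiff hp.1 le_rfl⟩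
  · rintro ⟨T, U⟩ hp
    simp only [mem_sigma, mem_powerset] at hp ⊢
    exact ⟨union_subset hp.1 (hp.2.trans sdiff_subset), subset_union_left⟩
  · rintro ⟨T, T'⟩ hp
    simp only [mem_sigma, mem_powerset] at hp
    exact Sigma.ext (union_sdiff_of_subset hp.2) HEq.rfl
  · rintro ⟨T, U⟩ hp
    simp only [mem_sigma, mem_powerset] at hp
    exact Sigma.ext rfl (heq_of_eq (union_sdiff_cancel_left
      (disjoint_of_subset_right hp.2 sdiff_disjoint.symm)))

namespace List

variable {A : Type*} [Semiring A]

theorem sum_pow_of_commute_of_mul_self_eq_zero (l : List A)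
    (hcomm : ∀ x ∈ l, ∀ y ∈ l, Commute x y) (hsq : ∀ x ∈ l, x * x = 0) (k : ℕ) :
    l.sum ^ k = k.factorial • ((l.sublistsLen k).map prod).sum := by
  induction l generalizing k with
  | nil => cases k <;> simp
  | cons a t ih =>
    have ht := ih (fun x hx y hy => hcomm x (mem_cons_of_mem a hx) y (mem_cons_of_mem a hy))
      (fun x hx => hsq x (mem_cons_of_mem a hx))
    cases k with
    | zero => simp
    | succ k =>
      have hca : Commute a t.sum :=
        Commute.list_sum_right _ _ fun x hx => hcomm a mem_cons_self x (mem_cons_of_mem a hx)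
      have ha : ∀ i, a ^ (i + 2) = 0 := fun i => by
        rw [pow_add, sq, hsq a mem_cons_self, mul_zero]
      -- `a² = 0` leaves two terms of the binomial expansion
      have hbinom : (a + t.sum) ^ (k + 1) = t.sum ^ (k + 1) + (k + 1) • (a * t.sum ^ k) := by
        rw [hca.add_pow, Finset.sum_range_succ', Finset.sum_range_succ',
          Finset.sum_eq_zero fun i _ => by rw [ha, zero_mul, zero_mul]]
        simp only [zero_add, pow_zero, pow_one, one_mul, mul_one, Nat.choose_zero_right,
          Nat.choose_one_right, Nat.cast_one, Nat.add_sub_cancel, Nat.sub_zero, nsmul_eq_mul,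
          Nat.cast_comm, add_comm]
      rw [sum_cons, hbinom, sublistsLen_succ_cons, map_append, sum_append, smul_add, ht,
        ht k, mul_smul_comm, smul_smul, ← Nat.factorial_succ, map_map]
      simp [Function.comp_def, sum_map_mul_left]

theorem sum_pow_length_of_commute_of_mul_self_eq_zero (l : List A)
    (hcomm : ∀ x ∈ l, ∀ y ∈ l, Commute x y) (hsq : ∀ x ∈ l, x * x = 0) :
    l.sum ^ l.length = l.length.factorial • l.prod := by
  rw [sum_pow_of_commute_of_mul_self_eq_zero l hcomm hsq, sublistsLen_length, map_singleton,
    sum_singleton]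

theorem prod_ofFn_eq_zero_of_mul_eq_zero {m : ℕ} (f : Fin m → A)
    (hcomm : ∀ a b, Commute (f a) (f b)) {i j : Fin m} (hij : i ≠ j) (h : f i * f j = 0) :
    (ofFn f).prod = 0 := by
  have hperm : (ofFn f).Perm ((i :: j :: ((finRange m).erase i).erase j).map f) := by
    rw [ofFn_eq_map]
    refine (perm_cons_erase (mem_finRange i)).trans (Perm.cons i ?_) |>.map f
    exact perm_cons_erase ((mem_erase_of_ne hij.symm).2 (mem_finRange j))
  refine (hperm.prod_eq' ?_).trans ?_
  · rw [ofFn_eq_map]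
    exact pairwise_map.2 ((pairwise_lt_finRange m).imp fun _ => hcomm _ _)
  · rw [map_cons, map_cons, prod_cons, prod_cons, ← mul_assoc, h, zero_mul]

end List

section

variable {n : ℕ} {R : Type*} [CommRing R]

lemma gsign_mul_self (T U : Finset (Fin (2 * n))) : gsign T U * gsign T U = 1 := by
  rw [gsign, ← mul_pow]; norm_num

lemma gsign_empty_left (U : Finset (Fin (2 * n))) : gsign ∅ U = 1 := by
  simp [gsign]

lemma gsign_empty_right (T : Finset (Fin (2 * n))) : gsign T ∅ = 1 := by
  simp [gsign]

lemma gsign_union_left {T U : Finset (Fin (2 * n))} (h : Disjoint T U)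
    (V : Finset (Fin (2 * n))) : gsign (T ∪ U) V = gsign T V * gsign U V := by
  rw [gsign, gsign, gsign, ← pow_add, union_product, filter_union,
    card_union_of_disjoint (disjoint_filter_filter (disjoint_product.2 (Or.inl h)))]

lemma gsign_union_right {U V : Finset (Fin (2 * n))} (T : Finset (Fin (2 * n)))
    (h : Disjoint U V) : gsign T (U ∪ V) = gsign T U * gsign T V := by
  rw [gsign, gsign, gsign, ← pow_add, product_union, filter_union,
    card_union_of_disjoint (disjoint_filter_filter (disjoint_product.2 (Or.inr h)))]

lemma gsign_eq_one_of_forall_lt {T U : Finset (Fin (2 * n))} (h : ∀ t ∈ T, ∀ u ∈ U, t < u) :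
    gsign T U = 1 := by
  rw [gsign, filter_false_of_mem fun q hq => not_lt.2 (h q.1 (mem_product.1 hq).1 q.2
    (mem_product.1 hq).2).le, card_empty, pow_zero]

lemma gsign_mul_gsign_swap {T U : Finset (Fin (2 * n))} (h : Disjoint T U) :
    gsign T U * gsign U T = (-1) ^ (#T * #U) := by
  have hswap : #((U ×ˢ T).filter fun q => q.2 < q.1) = #((T ×ˢ U).filter fun q => q.1 < q.2) :=
    card_nbij' Prod.swap Prod.swap (fun _ hq => by simp_all) (fun _ hq => by simp_all)
      (fun _ _ => rfl) (fun _ _ => rfl)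
  have hne : ∀ q ∈ T ×ˢ U, ¬ q.2 < q.1 ↔ q.1 < q.2 := fun q hq =>
    ⟨fun hq' => lt_of_le_of_ne (not_lt.1 hq')
      (disjoint_iff_ne.1 h _ (mem_product.1 hq).1 _ (mem_product.1 hq).2),
     fun hq' => not_lt.2 hq'.le⟩
  rw [gsign, gsign, ← pow_add, hswap, ← filter_congr hne, card_filter_add_card_filter_not,
    card_product]

lemma gsign_swap {T U : Finset (Fin (2 * n))} (h : Disjoint T U) :
    gsign T U = (-1) ^ (#T * #U) * gsign U T := by
  rw [← gsign_mul_gsign_swap h, mul_assoc, gsign_mul_self, mul_one]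

lemma gmul_assoc (f g h : Grassmann n R) : gmul (gmul f g) h = gmul f (gmul g h) := by
  funext S
  set F : Finset (Fin (2 * n)) → Finset (Fin (2 * n)) → R := fun T U =>
    (gsign T U * gsign T (S \ (T ∪ U)) * gsign U (S \ (T ∪ U)) : ℤ) * f T * g U * h (S \ (T ∪ U))
  have hleft : gmul (gmul f g) h S = ∑ T ∈ S.powerset, ∑ T' ∈ T.powerset, F T' (T \ T') := by
    refine sum_congr rfl fun T hT => ?_
    rw [gmul, mul_sum, sum_mul]
    refine sum_congr rfl fun T' hT' => ?_
    have hT'T : T' ∪ (T \ T') = T := union_sdiff_of_subset (mem_powerset.1 hT')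
    have hsign := gsign_union_left (sdiff_disjoint.symm : Disjoint T' (T \ T')) (S \ T)
    rw [hT'T] at hsign
    simp only [F, hT'T, hsign]
    push_cast
    ring
  have hright : gmul f (gmul g h) S = ∑ T ∈ S.powerset, ∑ U ∈ (S \ T).powerset, F T U := by
    refine sum_congr rfl fun T _ => ?_
    rw [gmul, mul_sum]
    refine sum_congr rfl fun U hU => ?_
    have hrest : S \ (T ∪ U) = (S \ T) \ U := sdiff_sdiff_left.symm
    have hsign := gsign_union_right T (sdiff_disjoint.symm : Disjoint U ((S \ T) \ U))
    rw [union_sdiff_of_subset (mem_powerset.1 hU)] at hsign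
    simp only [F, hrest, hsign]
    push_cast
    ring
  rw [hleft, hright, sum_powerset_powerset_sdiff]

lemma gmul_gone (f : Grassmann n R) : gmul f gone = f := by
  funext S
  rw [gmul, sum_eq_single S]
  · simp [gone, gsign_empty_right]
  · intro T hT hTS
    simp [gone, sdiff_eq_empty_iff_subset, (mem_powerset.1 hT).ssubset_of_ne hTS |>.not_subset]
  · simp

lemma gone_gmul (f : Grassmann n R) : gmul gone f = f := by
  funext S
  rw [gmul, sum_eq_single ∅]
  · simp [gone, gsign_empty_left]
  · intro T _ hT
    simp [gone, hT]
  · simp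

/-- `Grassmann n R` with the product `gmul`: a type synonym, since `Grassmann n R` already
carries the pointwise ring structure of functions. -/
def GrassmannAlgebra (n : ℕ) (R : Type*) := Grassmann n R

namespace GrassmannAlgebra

instance : AddCommGroup (GrassmannAlgebra n R) := inferInstanceAs (AddCommGroup (Grassmann n R))

instance : Module R (GrassmannAlgebra n R) := inferInstanceAs (Module R (Grassmann n R))

lemma add_apply (f g : GrassmannAlgebra n R) (S : Finset (Fin (2 * n))) :
    (f + g) S = f S + g S := rfl

lemma neg_apply (f : GrassmannAlgebra n R) (S : Finset (Fin (2 * n))) : (-f) S = -f S := rfl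

lemma smul_apply (r : R) (f : GrassmannAlgebra n R) (S : Finset (Fin (2 * n))) :
    (r • f) S = r * f S := rfl

lemma sum_apply {ι : Type*} (s : Finset ι) (F : ι → GrassmannAlgebra n R)
    (S : Finset (Fin (2 * n))) : (∑ i ∈ s, F i) S = ∑ i ∈ s, F i S :=
  Finset.sum_apply (M := fun _ => R) S s F

instance : Ring (GrassmannAlgebra n R) where
  mul := gmul
  one := gone
  mul_assoc := gmul_assoc
  one_mul := gone_gmul
  mul_one := gmul_gone
  left_distrib f g h := funext fun S => by
    change gmul f (g + h) S = gmul f g S + gmul f h S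
    simp only [gmul, add_apply, mul_add, sum_add_distrib]
  right_distrib f g h := funext fun S => by
    change gmul (f + g) h S = gmul f h S + gmul g h S
    simp only [gmul, add_apply, add_mul, mul_add, sum_add_distrib]
  zero_mul f := funext fun S => by
    change gmul 0 f S = 0
    simp [gmul]
  mul_zero f := funext fun S => by
    change gmul f 0 S = 0
    simp [gmul]

lemma mul_apply (f g : GrassmannAlgebra n R) (S : Finset (Fin (2 * n))) :
    (f * g) S = ∑ T ∈ S.powerset, (gsign T (S \ T) : R) * f T * g (S \ T) := rfl

instance : Algebra R (GrassmannAlgebra n R) :=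
  Algebra.ofModule
    (fun r f g => funext fun S => by
      simp only [mul_apply, smul_apply, mul_sum]
      exact sum_congr rfl fun _ _ => by ring)
    (fun r f g => funext fun S => by
      simp only [mul_apply, smul_apply, mul_sum]
      exact sum_congr rfl fun _ _ => by ring)

lemma pow_eq_gpow (f : GrassmannAlgebra n R) (k : ℕ) : f ^ k = gpow f k := by
  induction k with
  | zero => rfl
  | succ k ih => rw [pow_succ', ih]; rfl

def monomial (T : Finset (Fin (2 * n))) : GrassmannAlgebra n R :=
  fun S => if S = T then 1 else 0

lemma one_eq_monomial_empty : (1 : GrassmannAlgebra n R) = monomial ∅ := rfl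

lemma monomial_mul_monomial {T U : Finset (Fin (2 * n))} (h : Disjoint T U) :
    (monomial T * monomial U : GrassmannAlgebra n R) = (gsign T U : R) • monomial (T ∪ U) := by
  funext S
  rw [mul_apply, smul_apply]
  by_cases hS : S = T ∪ U
  · subst hS
    rw [sum_eq_single T (fun T' _ hT' => by simp [monomial, hT'])
      fun hT => absurd (mem_powerset.2 subset_union_left) hT]
    rw [union_sdiff_cancel_left h]
    simp [monomial]
  · refine (sum_eq_zero fun T' hT' => ?_).trans (by simp [monomial, hS])
    by_cases hT' : T' = T
    · subst hT'
      have : S \ T' ≠ U := fun hU => hS (by rw [← hU, union_sdiff_of_subset (mem_powerset.1 hT')])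
      simp [monomial, this]
    · simp [monomial, hT']

def IsHomogeneous (d : ℕ) (f : GrassmannAlgebra n R) : Prop := ∀ S, f S ≠ 0 → #S = d

lemma isHomogeneous_monomial (T : Finset (Fin (2 * n))) :
    IsHomogeneous #T (monomial T : GrassmannAlgebra n R) := fun S hS => by
  rw [show S = T from by_contra fun h => hS (if_neg h)]

lemma IsHomogeneous.smul {d : ℕ} {f : GrassmannAlgebra n R} (hf : IsHomogeneous d f) (r : R) :
    IsHomogeneous d (r • f) := fun S hS => hf S fun h => hS (by rw [smul_apply, h, mul_zero])

lemma IsHomogeneous.neg {d : ℕ} {f : GrassmannAlgebra n R} (hf : IsHomogeneous d f) :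
    IsHomogeneous d (-f) := fun S hS => hf S fun h => hS (by rw [neg_apply, h, neg_zero])

lemma IsHomogeneous.sum {ι : Type*} {s : Finset ι} {d : ℕ} {F : ι → GrassmannAlgebra n R}
    (hF : ∀ i ∈ s, IsHomogeneous d (F i)) : IsHomogeneous d (∑ i ∈ s, F i) := fun S hS => by
  rw [sum_apply] at hS
  obtain ⟨i, hi, hFi⟩ := exists_ne_zero_of_sum_ne_zero hS
  exact hF i hi S hFi

lemma IsHomogeneous.mul {d e : ℕ} {f g : GrassmannAlgebra n R} (hf : IsHomogeneous d f)
    (hg : IsHomogeneous e g) : IsHomogeneous (d + e) (f * g) := fun S hS => by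
  rw [mul_apply] at hS
  obtain ⟨T, hT, hterm⟩ := exists_ne_zero_of_sum_ne_zero hS
  have hfT : f T ≠ 0 := fun h => hterm (by rw [h, mul_zero, zero_mul])
  have hgT : g (S \ T) ≠ 0 := fun h => hterm (by rw [h, mul_zero])
  rw [← hf T hfT, ← hg _ hgT, card_sdiff_of_subset (mem_powerset.1 hT),
    Nat.add_sub_cancel' (card_le_card (mem_powerset.1 hT))]

lemma IsHomogeneous.pow {d : ℕ} {f : GrassmannAlgebra n R} (hf : IsHomogeneous d f) (k : ℕ) :
    IsHomogeneous (d * k) (f ^ k) := by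
  induction k with
  | zero => simpa [one_eq_monomial_empty] using isHomogeneous_monomial (R := R) (n := n) ∅
  | succ k ih => simpa [pow_succ, mul_add] using ih.mul hf

lemma IsHomogeneous.mul_comm {d e : ℕ} {f g : GrassmannAlgebra n R} (hf : IsHomogeneous d f)
    (hg : IsHomogeneous e g) : f * g = (-1 : R) ^ (d * e) • (g * f) := by
  funext S
  rw [smul_apply, mul_apply, mul_apply, mul_sum]
  refine sum_nbij' (S \ ·) (S \ ·) (fun _ _ => by simp) (fun _ _ => by simp)
    (fun T hT => Finset.sdiff_sdiff_eq_self (mem_powerset.1 hT))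
    (fun T hT => Finset.sdiff_sdiff_eq_self (mem_powerset.1 hT)) fun T hT => ?_
  rw [Finset.sdiff_sdiff_eq_self (mem_powerset.1 hT)]
  by_cases hfT : f T = 0
  · simp [hfT]
  by_cases hgT : g (S \ T) = 0
  · simp [hgT]
  rw [gsign_swap sdiff_disjoint.symm, hf T hfT, hg _ hgT]
  push_cast
  ring

lemma IsHomogeneous.commute {d e : ℕ} {f g : GrassmannAlgebra n R} (hf : IsHomogeneous d f)
    (hg : IsHomogeneous e g) (hd : Even d) : Commute f g := by
  rw [Commute, SemiconjBy, hf.mul_comm hg, (hd.mul_right e).neg_one_pow, one_smul]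

lemma IsHomogeneous.mul_self_eq_zero {d : ℕ} {f : GrassmannAlgebra n R} (hf : IsHomogeneous d f)
    (hd : Odd d) : f * f = 0 := by
  funext S
  rw [mul_apply]
  refine sum_involution (fun T _ => S \ T) (fun T hT => ?_) (fun T hT hterm hfix => ?_)
    (fun _ _ => by simp) (fun T hT => Finset.sdiff_sdiff_eq_self (mem_powerset.1 hT))
  · rw [Finset.sdiff_sdiff_eq_self (mem_powerset.1 hT)]
    by_cases hfT : f T = 0
    · simp [hfT]
    by_cases hfT' : f (S \ T) = 0
    · simp [hfT']
    rw [gsign_swap sdiff_disjoint.symm, hf T hfT, hf _ hfT', (hd.mul hd).neg_one_pow]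
    push_cast
    ring
  · have hT : T = ∅ :=
      disjoint_self.1 (by simpa only [hfix] using (sdiff_disjoint : Disjoint (S \ T) T))
    have hd0 := hf T fun h => hterm (by rw [h, mul_zero, zero_mul])
    rw [hT, card_empty] at hd0
    subst hd0
    exact Nat.not_odd_zero hd

lemma prod_map_monomial {ι : Type*} [DecidableEq ι] (T : ι → Finset (Fin (2 * n)))
    {l : List ι} (hl : l.Pairwise fun i j => ∀ a ∈ T i, ∀ b ∈ T j, a < b) :
    (l.map fun i => (monomial (T i) : GrassmannAlgebra n R)).prod
      = monomial (l.toFinset.biUnion T) := by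
  induction l with
  | nil => rfl
  | cons i l ih =>
    rw [List.pairwise_cons] at hl
    have hlt : ∀ a ∈ T i, ∀ b ∈ l.toFinset.biUnion T, a < b := fun a ha b hb => by
      obtain ⟨j, hj, hb⟩ := mem_biUnion.1 hb
      exact hl.1 j (List.mem_toFinset.1 hj) a ha b hb
    rw [List.map_cons, List.prod_cons, ih hl.2,
      monomial_mul_monomial (disjoint_left.2 fun a ha hb => (hlt a ha a hb).false),
      gsign_eq_one_of_forall_lt hlt, Int.cast_one, one_smul, List.toFinset_cons, biUnion_insert]

def psiIndex (i : Fin n) : Fin (2 * n) := ⟨2 * i, by omega⟩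

def psibarIndex (i : Fin n) : Fin (2 * n) := ⟨2 * i + 1, by omega⟩

-- `ψ i` and `ψbar i` are `psi i` and `psibar i` as elements of `GrassmannAlgebra n R`.
def ψ (i : Fin n) : GrassmannAlgebra n R := monomial {psiIndex i}

def ψbar (i : Fin n) : GrassmannAlgebra n R := monomial {psibarIndex i}

lemma isHomogeneous_ψ (i : Fin n) : IsHomogeneous 1 (ψ i : GrassmannAlgebra n R) :=
  isHomogeneous_monomial {psiIndex i}

lemma isHomogeneous_ψbar (i : Fin n) : IsHomogeneous 1 (ψbar i : GrassmannAlgebra n R) :=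
  isHomogeneous_monomial {psibarIndex i}

def ψLin : (Fin n → R) →ₗ[R] GrassmannAlgebra n R :=
  Fintype.linearCombination R fun j => ψ j

def row (i : Fin n) : (Fin n → R) →ₗ[R] GrassmannAlgebra n R :=
  -(LinearMap.mulLeft R (ψbar i) ∘ₗ ψLin)

lemma row_apply (i : Fin n) (v : Fin n → R) :
    row i v = -(ψbar i * ψLin v) := rfl

lemma isHomogeneous_ψLin (v : Fin n → R) : IsHomogeneous 1 (ψLin v) := by
  rw [ψLin, Fintype.linearCombination_apply]
  exact IsHomogeneous.sum fun j _ => (isHomogeneous_ψ j).smul (v j)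

lemma isHomogeneous_row (i : Fin n) (v : Fin n → R) : IsHomogeneous 2 (row i v) :=
  ((isHomogeneous_ψbar i).mul (isHomogeneous_ψLin v)).neg

lemma row_mul_row_eq_zero (i k : Fin n) (v : Fin n → R) : row i v * row k v = 0 := by
  have hswap : ψLin v * ψbar k = -(ψbar k * ψLin v) := by
    rw [(isHomogeneous_ψLin v).mul_comm (isHomogeneous_ψbar k), pow_one, neg_one_smul]
  calc row i v * row k v = ψbar i * (ψLin v * ψbar k) * ψLin v := by
        simp only [row_apply, neg_mul_neg, mul_assoc]
    _ = -(ψbar i * ψbar k * (ψLin v * ψLin v)) := by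
        rw [hswap]; noncomm_ring
    _ = 0 := by
        rw [(isHomogeneous_ψLin v).mul_self_eq_zero odd_one, mul_zero, neg_zero]

lemma row_single (i : Fin n) :
    row i (Pi.single i 1) = (monomial {psiIndex i, psibarIndex i} : GrassmannAlgebra n R) := by
  have hlt : psiIndex i < psibarIndex i := Fin.mk_lt_mk.2 (Nat.lt_succ_self _)
  rw [row_apply, ψLin, Fintype.linearCombination_apply_single, one_smul,
    (isHomogeneous_ψbar i).mul_comm (isHomogeneous_ψ i), pow_one, neg_one_smul, neg_neg]
  exact (monomial_mul_monomial (disjoint_singleton.2 hlt.ne)).trans (by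
    rw [gsign_eq_one_of_forall_lt (by simpa using hlt), Int.cast_one, one_smul]; rfl)

def berezinLinear : GrassmannAlgebra n R →ₗ[R] R where
  toFun f := berezin f
  map_add' _ _ := rfl
  map_smul' _ _ := rfl

noncomputable def berezinRows : (Fin n → R) [⋀^Fin n]→ₗ[R] R :=
  { berezinLinear.compMultilinearMap
      ((MultilinearMap.mkPiAlgebraFin R n (GrassmannAlgebra n R)).compLinearMap row) with
    map_eq_zero_of_eq' v i j hv hij := by
      have hprod : (List.ofFn fun k => row k (v k)).prod = 0 :=
        List.prod_ofFn_eq_zero_of_mul_eq_zero _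
          (fun a b => (isHomogeneous_row a _).commute (isHomogeneous_row b _) even_two) hij
          (hv ▸ row_mul_row_eq_zero i j (v j))
      exact congrArg berezinLinear hprod |>.trans (map_zero _) }

lemma berezinRows_apply (v : Fin n → Fin n → R) :
    berezinRows v = berezin (List.ofFn fun i => row i (v i)).prod := rfl

lemma berezinRows_basisFun : berezinRows (Pi.basisFun R (Fin n)) = 1 := by
  have hsorted : (List.finRange n).Pairwise fun i j =>
      ∀ a ∈ ({psiIndex i, psibarIndex i} : Finset (Fin (2 * n))),
        ∀ b ∈ ({psiIndex j, psibarIndex j} : Finset _), a < b :=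
    (List.pairwise_lt_finRange n).imp fun hij a ha b hb => by
      simp only [mem_insert, mem_singleton] at ha hb
      rcases ha with rfl | rfl <;> rcases hb with rfl | rfl <;>
        simp only [psiIndex, psibarIndex, Fin.mk_lt_mk] <;> omega
  have hcover : (List.finRange n).toFinset.biUnion (fun i => {psiIndex i, psibarIndex i})
      = (univ : Finset (Fin (2 * n))) :=
    eq_univ_of_forall fun a => mem_biUnion.2 ⟨⟨a / 2, by omega⟩, by simp, by
      rcases Nat.even_or_odd' a with ⟨m, hm | hm⟩
      · simp [psiIndex, Fin.ext_iff, hm]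
      · simp [psibarIndex, Fin.ext_iff, hm]; omega⟩
  simp only [berezinRows_apply, Pi.basisFun_apply, row_single, List.ofFn_eq_map,
    prod_map_monomial _ hsorted, hcover, berezin, monomial, if_true]

lemma berezinRows_eq_det (v : Fin n → Fin n → R) : berezinRows v = (Matrix.of v).det := by
  rw [berezinRows.eq_smul_basis_det (Pi.basisFun R (Fin n)), AlternatingMap.smul_apply,
    berezinRows_basisFun, one_smul, Pi.basisFun_det_apply]

lemma neg_quadForm_eq_sum_row (A : Matrix (Fin n) (Fin n) R) :
    (-quadForm A : GrassmannAlgebra n R) = ∑ i, row i (A i) := by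
  funext S
  simp only [sum_apply, row_apply, ψLin, Fintype.linearCombination_apply, mul_sum,
    mul_smul_comm, neg_apply, smul_apply]
  rw [Pi.neg_apply, quadForm, ← sum_neg_distrib]
  rfl

lemma berezin_gexp_of_isHomogeneous_two [Algebra ℚ R] {f : GrassmannAlgebra n R}
    (hf : IsHomogeneous 2 f) :
    berezin (gexp f) = algebraMap ℚ R (n.factorial : ℚ)⁻¹ * berezin (f ^ n) := by
  have hvanish : ∀ k ≠ n, (f ^ k) univ = 0 := fun k hk => by_contra fun h => hk <| by
    have := hf.pow k univ h
    rw [card_univ, Fintype.card_fin] at this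
    omega
  simp only [berezin, gexp]
  rw [sum_eq_single n (fun k _ hk => by rw [← pow_eq_gpow, hvanish k hk, mul_zero])
    (fun h => absurd (mem_range.2 (by omega)) h), pow_eq_gpow]

lemma berezin_nsmul (k : ℕ) (f : GrassmannAlgebra n R) : berezin (k • f) = k * berezin f :=
  nsmul_eq_mul k (f univ)

lemma sum_row_pow (A : Matrix (Fin n) (Fin n) R) :
    (∑ i, row i (A i)) ^ n = n.factorial • (List.ofFn fun i => row i (A i)).prod := by
  have hcomm : ∀ x ∈ List.ofFn (fun i => row i (A i)), ∀ y ∈ List.ofFn (fun i => row i (A i)),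
      Commute x y := by
    simp only [List.mem_ofFn, forall_exists_index, forall_apply_eq_imp_iff]
    exact fun i j => (isHomogeneous_row i _).commute (isHomogeneous_row j _) even_two
  have hsq : ∀ x ∈ List.ofFn (fun i => row i (A i)), x * x = 0 := by
    simp only [List.mem_ofFn, forall_exists_index, forall_apply_eq_imp_iff]
    exact fun i => row_mul_row_eq_zero i i _
  simpa [List.sum_ofFn] using List.sum_pow_length_of_commute_of_mul_self_eq_zero _ hcomm hsq

end GrassmannAlgebra

end

open GrassmannAlgebra

/-- Berezin integral representation of the determinant: for any `n×n` matrix `A` over a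
commutative ring (with `ℚ`-algebra structure so that the exponential makes sense),
`det A = ∫ dψ̄ dψ e^{−ψ̄Aψ}`. -/
theorem berezin_det {R : Type*} [CommRing R] [Algebra ℚ R] {n : ℕ}
    (A : Matrix (Fin n) (Fin n) R) :
    berezin (gexp (-quadForm A)) = A.det := by
  have hhom : IsHomogeneous 2 (∑ i, row i (A i)) :=
    IsHomogeneous.sum fun i _ => isHomogeneous_row i (A i)
  rw [neg_quadForm_eq_sum_row, berezin_gexp_of_isHomogeneous_two hhom, sum_row_pow,
    berezin_nsmul, ← mul_assoc, ← map_natCast (algebraMap ℚ R),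
    ← map_mul, inv_mul_cancel₀ (by exact_mod_cast n.factorial_ne_zero), map_one, one_mul]
  exact berezinRows_eq_det A
end

section
/- The Moyal ⋆-product has the trace property: for Schwartz functions f,g on ℝ^D with Θ a nondegenerate skew-symmetric D×D matrix, ∫ (f ⋆ g)(x) dx = ∫ f(x)g(x) dx = ∫ (g ⋆ f)(x) dx. -/
open MeasureTheory Matrix

/-- The Moyal ⋆-product on `ℝ^D` associated with a `D×D` matrix `Θ`:
`(f⋆g)(x) = (π^D |det Θ|)⁻¹ ∫∫ f(x+y) g(x+z) e^{−2i y·Θ⁻¹z} dy dz`. -/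
noncomputable def moyal (D : ℕ) (Θ : Matrix (Fin D) (Fin D) ℝ)
    (f g : (Fin D → ℝ) → ℂ) : (Fin D → ℝ) → ℂ :=
  fun x =>
    (((Real.pi ^ D * |Θ.det|)⁻¹ : ℝ) : ℂ) *
      ∫ y : Fin D → ℝ, ∫ z : Fin D → ℝ,
        f (x + y) * g (x + z) *
          Complex.exp (-2 * Complex.I * ((∑ a, ∑ b, y a * Θ⁻¹ a b * z b : ℝ) : ℂ))

/-!
Integrating out `z` in the definition turns the Moyal product into
`(f ⋆ g)(x) = π^{-D} ∫ f(x + Θᵀu) e^{2i u·x} ĝ(u) du`, where `ĝ(w) = ∫ g(z) e^{-2i w·z} dz`.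
This kernel is a shear of `f ⊗ ĝ` times a phase, hence integrable in `(x, u)`, so by Fubini we may
integrate over `x` first. Since `Θ` is skew, `u · Θᵀu = 0` and the `x`-integral is exactly
`f̂(-u)`; Parseval, `∫ f̂(-u) ĝ(u) du = π^D ∫ f g`, finishes. The second identity follows because
`∫ f g` is symmetric in `f` and `g`.
-/

open Complex SchwartzMap Real
open scoped FourierTransform RealInnerProductSpace

theorem SchwartzMap.integral_fourier_neg_mul_fourier {V : Type*} [NormedAddCommGroup V]
    [InnerProductSpace ℝ V] [FiniteDimensional ℝ V] [MeasurableSpace V] [BorelSpace V]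
    (f g : 𝓢(V, ℂ)) :
    ∫ ξ, 𝓕 f (-ξ) * 𝓕 g ξ = ∫ x, f x * g x := by
  simpa [fourierInv_apply_eq] using integral_fourierInv_mul_eq f (𝓕 g)

theorem Matrix.dotProduct_mulVec_self_eq_zero_of_transpose_eq_neg {n R : Type*} [Fintype n]
    [CommRing R] [NoZeroDivisors R] [CharZero R] {A : Matrix n n R} (hA : Aᵀ = -A) (u : n → R) :
    u ⬝ᵥ (A *ᵥ u) = 0 := by
  refine self_eq_neg.mp ?_
  conv_lhs => rw [dotProduct_mulVec, ← mulVec_transpose, hA, dotProduct_comm, neg_mulVec,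
    dotProduct_neg]

theorem Matrix.sum_sum_mul_mul_eq_vecMul_dotProduct {n R : Type*} [Fintype n] [CommSemiring R]
    (M : Matrix n n R) (y z : n → R) :
    ∑ a, ∑ b, y a * M a b * z b = (y ᵥ* M) ⬝ᵥ z := by
  rw [Finset.sum_comm]
  simp only [dotProduct, vecMul, Finset.sum_mul]

theorem MeasureTheory.Integrable.comp_add_mul_prod {α β : Type*} [MeasurableSpace α]
    [MeasurableSpace β] [AddGroup α] [MeasurableAdd₂ α] {μ : Measure α} {ν : Measure β}
    [SFinite μ] [SFinite ν] [μ.IsAddRightInvariant] {F : α → ℂ} {G : β → ℂ}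
    (hF : Integrable F μ) (hG : Integrable G ν) {A : β → α} (hA : Measurable A) :
    Integrable (fun p : α × β => F (p.1 + A p.2) * G p.2) (μ.prod ν) := by
  have hshear : MeasurePreserving (fun p : β × α => (p.1, p.2 + A p.1)) (ν.prod μ) (ν.prod μ) :=
    (MeasurePreserving.id ν).skew_product (measurable_snd.add (hA.comp measurable_fst))
      (ae_of_all _ fun u => map_add_right_eq_self μ (A u))
  have hprod := hG.mul_prod hF
  exact ((hshear.integrable_comp hprod.aestronglyMeasurable).mpr hprod).swap.congr
    (ae_of_all _ fun p => mul_comm _ _)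

section Pi

variable {ι : Type*} [Fintype ι]

theorem EuclideanSpace.integral_comp_ofLp {G : Type*} [NormedAddCommGroup G] [NormedSpace ℝ G]
    (h : (ι → ℝ) → G) : ∫ x : EuclideanSpace ℝ ι, h x = ∫ y, h y :=
  (EuclideanSpace.volume_preserving_symm_measurableEquiv_toLp ι).integral_comp
    (MeasurableEquiv.measurableEmbedding _) h

theorem Matrix.integral_comp_mulVec [DecidableEq ι] {E : Type*} [NormedAddCommGroup E]
    [NormedSpace ℝ E] {M : Matrix ι ι ℝ} (hM : M.det ≠ 0) (φ : (ι → ℝ) → E) :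
    ∫ y, φ y = |M.det| • ∫ u, φ (M *ᵥ u) := by
  have hemb : MeasurableEmbedding (toLin' M) :=
    ((toLin' M).isClosedEmbedding_of_injective
      (LinearMap.ker_eq_bot.mpr (mulVec_injective_of_det_ne_zero hM))).measurableEmbedding
  rw [show ∫ u, φ (M *ᵥ u) = ∫ u, φ (toLin' M u) from rfl, ← hemb.integral_map,
    Real.map_matrix_volume_pi_eq_smul_volume_pi hM, integral_smul_measure, smul_smul,
    ENNReal.toReal_ofReal (abs_nonneg _), abs_inv, mul_inv_cancel₀ (abs_ne_zero.mpr hM), one_smul]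

namespace SchwartzMap

/-- The Fourier transform in the normalisation `w ↦ ∫ g(z) e^{-2i w·z} dz` (`fourierDot_apply`),
obtained from `𝓕` on `EuclideanSpace` by the rescaling `w ↦ w / π`. -/
noncomputable def fourierDot (g : 𝓢(ι → ℝ, ℂ)) : 𝓢(ι → ℝ, ℂ) :=
  compCLMOfContinuousLinearEquiv ℝ
    ((LinearEquiv.smulOfNeZero ℝ (ι → ℝ) π⁻¹ (inv_ne_zero pi_ne_zero)).toContinuousLinearEquiv.trans
      (PiLp.continuousLinearEquiv 2 ℝ fun _ : ι => ℝ).symm)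
    (𝓕 (compCLMOfContinuousLinearEquiv ℝ (PiLp.continuousLinearEquiv 2 ℝ fun _ : ι => ℝ) g))

theorem fourierDot_apply (g : 𝓢(ι → ℝ, ℂ)) (w : ι → ℝ) :
    fourierDot g w = ∫ z, g z * cexp (-2 * I * ((w ⬝ᵥ z : ℝ) : ℂ)) := by
  rw [fourierDot, compCLMOfContinuousLinearEquiv_apply, Function.comp_apply, fourier_coe,
    Real.fourier_eq', ← EuclideanSpace.integral_comp_ofLp]
  congr 1 with v
  have hinner : ⟪v, WithLp.toLp 2 (π⁻¹ • w)⟫ = π⁻¹ * (w ⬝ᵥ v) := by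
    simp [PiLp.inner_apply, dotProduct, Finset.mul_sum, mul_comm, mul_left_comm, mul_assoc]
  change cexp (↑(-2 * π * ⟪v, WithLp.toLp 2 (π⁻¹ • w)⟫) * I) • g v = _
  rw [hinner, smul_eq_mul, mul_comm]
  congr 2
  push_cast
  field_simp

theorem integral_fourierDot_neg_mul_fourierDot (f g : 𝓢(ι → ℝ, ℂ)) :
    ∫ w, fourierDot f (-w) * fourierDot g w = π ^ Fintype.card ι * ∫ x, f x * g x := by
  set e := compCLMOfContinuousLinearEquiv ℝ (PiLp.continuousLinearEquiv 2 ℝ fun _ : ι => ℝ) (F := ℂ)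
  have hscale := Measure.integral_comp_smul (volume : Measure (ι → ℝ))
    (fun v => 𝓕 (e f) (-WithLp.toLp 2 v) * 𝓕 (e g) (WithLp.toLp 2 v)) π⁻¹
  rw [Module.finrank_fintype_fun_eq_card, inv_pow, inv_inv, abs_of_pos (by positivity)] at hscale
  calc ∫ w, fourierDot f (-w) * fourierDot g w
      = ∫ w, 𝓕 (e f) (-WithLp.toLp 2 (π⁻¹ • w)) * 𝓕 (e g) (WithLp.toLp 2 (π⁻¹ • w)) := by
        congr 1 with w
        simp [fourierDot, e]
    _ = π ^ Fintype.card ι * ∫ ξ : EuclideanSpace ℝ ι, 𝓕 (e f) (-ξ) * 𝓕 (e g) ξ := by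
        rw [hscale, ← EuclideanSpace.integral_comp_ofLp, Complex.real_smul]
        push_cast
        rfl
    _ = π ^ Fintype.card ι * ∫ x, f x * g x := by
        rw [integral_fourier_neg_mul_fourier, ← EuclideanSpace.integral_comp_ofLp]
        rfl

theorem integral_comp_add_left_mul_cexp (g : 𝓢(ι → ℝ, ℂ)) (a w : ι → ℝ) :
    ∫ z, g (a + z) * cexp (-2 * I * ((w ⬝ᵥ z : ℝ) : ℂ))
      = cexp (2 * I * ((w ⬝ᵥ a : ℝ) : ℂ)) * fourierDot g w := by
  have hshift : ∀ z, g (a + z) * cexp (-2 * I * ((w ⬝ᵥ z : ℝ) : ℂ)) =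
      g (a + z) * cexp (-2 * I * ((w ⬝ᵥ (a + z) : ℝ) : ℂ)) * cexp (2 * I * ((w ⬝ᵥ a : ℝ) : ℂ)) := by
    intro z
    rw [mul_assoc (g (a + z)), ← Complex.exp_add, dotProduct_add]
    congr 2
    push_cast
    ring
  simp_rw [hshift]
  rw [integral_add_left_eq_self (fun z => g z * cexp (-2 * I * ((w ⬝ᵥ z : ℝ) : ℂ)) *
    cexp (2 * I * ((w ⬝ᵥ a : ℝ) : ℂ))), integral_mul_const, fourierDot_apply, mul_comm]

end SchwartzMap

end Pi

section Moyal

variable {D : ℕ} (Θ : Matrix (Fin D) (Fin D) ℝ)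

noncomputable def moyalKernel (f g : 𝓢(Fin D → ℝ, ℂ)) (x u : Fin D → ℝ) : ℂ :=
  f (x + Θᵀ *ᵥ u) * (cexp (2 * I * ((u ⬝ᵥ x : ℝ) : ℂ)) * fourierDot g u)

theorem moyal_eq_integral_moyalKernel (hdet : IsUnit Θ.det) (f g : 𝓢(Fin D → ℝ, ℂ))
    (x : Fin D → ℝ) :
    moyal D Θ f g x = (π ^ D : ℂ)⁻¹ * ∫ u, moyalKernel Θ f g x u := by
  have hinner : ∀ y, ∫ z, f (x + y) * g (x + z) *
        cexp (-2 * I * ((∑ a, ∑ b, y a * Θ⁻¹ a b * z b : ℝ) : ℂ))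
      = f (x + y) * (cexp (2 * I * (((y ᵥ* Θ⁻¹) ⬝ᵥ x : ℝ) : ℂ)) * fourierDot g (y ᵥ* Θ⁻¹)) := by
    intro y
    simp_rw [sum_sum_mul_mul_eq_vecMul_dotProduct, mul_assoc (f (x + y)), integral_const_mul,
      integral_comp_add_left_mul_cexp]
  have hdetT : Θᵀ.det ≠ 0 := by rw [det_transpose]; exact hdet.ne_zero
  have hcancel : ∀ u, (Θᵀ *ᵥ u) ᵥ* Θ⁻¹ = u := fun u => by
    rw [mulVec_transpose, vecMul_vecMul, mul_nonsing_inv Θ hdet, vecMul_one]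
  simp_rw [moyal, hinner]
  rw [integral_comp_mulVec hdetT, det_transpose]
  simp_rw [hcancel]
  rw [Complex.real_smul, ← mul_assoc]
  congr 1
  have : ((|Θ.det| : ℝ) : ℂ) ≠ 0 := ofReal_ne_zero.mpr (abs_ne_zero.mpr hdet.ne_zero)
  push_cast
  field_simp

theorem integrable_moyalKernel (f g : 𝓢(Fin D → ℝ, ℂ)) :
    Integrable (Function.uncurry (moyalKernel Θ f g)) (volume.prod volume) := by
  have hbase := (f.integrable (μ := volume)).comp_add_mul_prod
    ((fourierDot g).integrable (μ := volume)) (A := fun u => Θᵀ *ᵥ u) (by fun_prop)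
  have hphase : Continuous fun p : (Fin D → ℝ) × (Fin D → ℝ) =>
      cexp (2 * I * ((p.2 ⬝ᵥ p.1 : ℝ) : ℂ)) := by fun_prop
  refine (hbase.mul_bdd hphase.aestronglyMeasurable (c := 1) (ae_of_all _ fun p => ?_)).congr
    (ae_of_all _ fun p => ?_)
  · simp [Complex.norm_exp]
  · simp only [Function.uncurry, moyalKernel]
    ring

theorem integral_moyalKernel (hskew : Θᵀ = -Θ) (f g : 𝓢(Fin D → ℝ, ℂ)) (u : Fin D → ℝ) :
    ∫ x, moyalKernel Θ f g x u = fourierDot f (-u) * fourierDot g u := by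
  have hskewT : Θᵀᵀ = -Θᵀ := by rw [transpose_transpose, hskew, neg_neg]
  calc ∫ x, moyalKernel Θ f g x u
      = (∫ x, f (Θᵀ *ᵥ u + x) * cexp (-2 * I * (((-u) ⬝ᵥ x : ℝ) : ℂ))) * fourierDot g u := by
        rw [← integral_mul_const]
        congr 1 with x
        simp only [moyalKernel, add_comm x, neg_dotProduct, ofReal_neg, mul_neg, neg_mul, neg_neg,
          mul_assoc]
    _ = fourierDot f (-u) * fourierDot g u := by
        -- the translation by `Θᵀu` contributes the phase `e^{-2i u·Θᵀu} = 1`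
        rw [integral_comp_add_left_mul_cexp, neg_dotProduct,
          dotProduct_mulVec_self_eq_zero_of_transpose_eq_neg hskewT]
        simp

theorem integral_moyal (hskew : Θᵀ = -Θ) (hdet : IsUnit Θ.det) (f g : 𝓢(Fin D → ℝ, ℂ)) :
    ∫ x, moyal D Θ f g x = ∫ x, f x * g x := by
  calc ∫ x, moyal D Θ f g x = (π ^ D : ℂ)⁻¹ * ∫ x, ∫ u, moyalKernel Θ f g x u := by
        simp_rw [moyal_eq_integral_moyalKernel Θ hdet]
        exact integral_const_mul _ _
    _ = (π ^ D : ℂ)⁻¹ * ∫ u, fourierDot f (-u) * fourierDot g u := by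
        rw [integral_integral_swap (integrable_moyalKernel Θ f g)]
        simp_rw [integral_moyalKernel Θ hskew]
    _ = ∫ x, f x * g x := by
        rw [integral_fourierDot_neg_mul_fourierDot, Fintype.card_fin, ← mul_assoc,
          inv_mul_cancel₀ (pow_ne_zero _ (ofReal_ne_zero.mpr pi_ne_zero)), one_mul]

end Moyal

/-- Trace property of the Moyal product: for Schwartz functions `f, g` on `ℝ^D` and a
nondegenerate skew-symmetric matrix `Θ`,
`∫ (f ⋆ g)(x) dx = ∫ f(x) g(x) dx = ∫ (g ⋆ f)(x) dx`. -/
theorem moyal_trace (D : ℕ) (Θ : Matrix (Fin D) (Fin D) ℝ)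
    (hskew : Θᵀ = -Θ) (hdet : IsUnit Θ.det)
    (f g : SchwartzMap (Fin D → ℝ) ℂ) :
    (∫ x : Fin D → ℝ, moyal D Θ f g x) = (∫ x : Fin D → ℝ, f x * g x) ∧
    (∫ x : Fin D → ℝ, moyal D Θ f g x) = (∫ x : Fin D → ℝ, moyal D Θ g f x) := by
  refine ⟨integral_moyal Θ hskew hdet f g, ?_⟩
  simp_rw [integral_moyal Θ hskew hdet, mul_comm (f _)]
end
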